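/- Let ν ≥ 1, let b_1,…,b_ν be real with b_k ≠ 0 for at least one k, let 0 < ω_1 ≤ … ≤ ω_ν, and let s_e > 0. Define b̃ = Σ_{k=1}^{ν} b_k²/(ω_k+s_e), ẽ = Σ_{k=1}^{ν} b_k²/(ω_k+s_e)², ã = Σ_{k=1}^{ν} b_k² ω_k/(ω_k+s_e)², h_ν(s) = Σ_{k=1}^{ν} b_k²/(s+ω_k), and h_{νk}(s) = b̃²/(s·ẽ + ã). Then the reduced system matches the first two moments of the original at the expansion point: h_{νk}(s_e) = h_ν(s_e) and h_{νk}'(s_e) = h_ν'(s_e). Consequently the error function e_{νk}(s) = (h_{νk}(s) − h_ν(s))/h_ν(s) and its derivative both vanish at s = s_e. -/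

import Mathlib

open Complex Finset

/-!
At the expansion point the Galerkin denominator collapses: since
`s_e/(ω+s_e)² + ω/(ω+s_e)² = 1/(ω+s_e)`, one has `s_e ẽ + ã = b̃`, hence
`h_{νk}(s_e) = b̃²/b̃ = b̃ = h_ν(s_e)`, and both derivatives at `s_e` equal `-ẽ`
(for `h_{νk}` this is `-b̃² ẽ/b̃²`). Equal values and derivatives, with `h_ν(s_e) = b̃ > 0`,
give the relative error a double zero at `s_e`.
-/

section

variable {𝕜 : Type*} [NontriviallyNormedField 𝕜] {ι : Type*}

theorem hasDerivAt_sum_div_add (t : Finset ι) (c ω : ι → 𝕜) {s : 𝕜}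
    (hs : ∀ k ∈ t, s + ω k ≠ 0) :
    HasDerivAt (fun z => ∑ k ∈ t, c k / (z + ω k)) (-∑ k ∈ t, c k / (s + ω k) ^ 2) s := by
  rw [← sum_neg_distrib]
  refine HasDerivAt.fun_sum fun k hk => ?_
  refine ((hasDerivAt_const s (c k)).fun_div ((hasDerivAt_id' s).add_const (ω k))
    (hs k hk)).congr_deriv ?_
  simp only [zero_mul, mul_one, zero_sub, neg_div]

theorem hasDerivAt_sq_div_mul_add {b e a s : 𝕜} (hs : s * e + a = b) (hb : b ≠ 0) :
    HasDerivAt (fun z => b ^ 2 / (z * e + a)) (-e) s := by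
  refine ((hasDerivAt_const s (b ^ 2)).fun_div (((hasDerivAt_id' s).mul_const e).add_const a)
    (hs ▸ hb)).congr_deriv ?_
  rw [hs]
  field_simp
  ring

theorem hasDerivAt_sub_div_of_eq {f g : 𝕜 → 𝕜} {d x : 𝕜} (hf : HasDerivAt f d x)
    (hg : HasDerivAt g d x) (hfg : f x = g x) (hgx : g x ≠ 0) :
    HasDerivAt (fun z => (f z - g z) / g z) 0 x := by
  simpa [hfg] using (hf.fun_sub hg).fun_div hg hgx

end

theorem mul_sum_div_sq_add_sum_mul_div_sq {K ι : Type*} [Field K] (t : Finset ι) (c ω : ι → K)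
    {s : K} (hs : ∀ k ∈ t, ω k + s ≠ 0) :
    s * ∑ k ∈ t, c k / (ω k + s) ^ 2 + ∑ k ∈ t, c k * ω k / (ω k + s) ^ 2
      = ∑ k ∈ t, c k / (ω k + s) := by
  rw [mul_sum, ← sum_add_distrib]
  refine sum_congr rfl fun k hk => ?_
  field_simp [hs k hk]
  ring

theorem sum_sq_div_pos {ι : Type*} [Fintype ι] (b d : ι → ℝ) (hd : ∀ k, 0 < d k)
    (hb : ∃ k, b k ≠ 0) : 0 < ∑ k, b k ^ 2 / d k := by
  obtain ⟨k, hk⟩ := hb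
  exact sum_pos' (fun i _ => div_nonneg (sq_nonneg _) (hd i).le)
    ⟨k, mem_univ k, div_pos (by positivity) (hd k)⟩

/-- **Moment matching (Step 3 of the KMS error-bound proof).** The one-point
Krylov reduced system `h_{νk}(s) = b̃²/(s·ẽ + ã)` matches the first two moments
of `h_ν(s) = Σ b_k²/(s+ω_k)` at the expansion point `s_e`: the values and first
derivatives agree at `s_e`, hence the relative error function and its
derivative vanish there. -/
theorem krylov_moment_matching (ν : ℕ) (hν : 1 ≤ ν) (b ω : Fin ν → ℝ)
    (hb : ∃ k, b k ≠ 0) (hωpos : 0 < ω ⟨0, hν⟩) (hωmono : Monotone ω)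
    (se : ℝ) (hse : 0 < se)
    (btil etil atil : ℝ)
    (hbtil : btil = ∑ k, (b k) ^ 2 / (ω k + se))
    (hetil : etil = ∑ k, (b k) ^ 2 / (ω k + se) ^ 2)
    (hatil : atil = ∑ k, (b k) ^ 2 * ω k / (ω k + se) ^ 2)
    (hνfun hνkfun eνk : ℂ → ℂ)
    (hhν : ∀ s : ℂ, hνfun s = ∑ k, ((b k : ℂ)) ^ 2 / (s + (ω k : ℂ)))
    (hhνk : ∀ s : ℂ, hνkfun s = (btil : ℂ) ^ 2 / (s * (etil : ℂ) + (atil : ℂ)))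
    (heνk : ∀ s : ℂ, eνk s = (hνkfun s - hνfun s) / hνfun s) :
    hνkfun (se : ℂ) = hνfun (se : ℂ) ∧
      deriv hνkfun (se : ℂ) = deriv hνfun (se : ℂ) ∧
      eνk (se : ℂ) = 0 ∧ deriv eνk (se : ℂ) = 0 := by
  have hpole : ∀ k, 0 < ω k + se := fun k => by
    linarith [hωmono (show (⟨0, hν⟩ : Fin ν) ≤ k from Nat.zero_le _)]
  have hbtilC : (btil : ℂ) ≠ 0 :=
    ofReal_ne_zero.mpr (hbtil ▸ sum_sq_div_pos b (fun k => ω k + se) hpole hb).ne'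
  have hpoleC : ∀ k ∈ univ, (se : ℂ) + ω k ≠ 0 := fun k _ => by
    exact_mod_cast (add_comm (ω k) se ▸ hpole k).ne'
  have hdenom : (se : ℂ) * etil + atil = btil := by
    have h := mul_sum_div_sq_add_sum_mul_div_sq univ (fun k => b k ^ 2) ω
      fun k _ => (hpole k).ne'
    rw [← hetil, ← hatil, ← hbtil] at h
    exact_mod_cast h
  have hνval : hνfun se = btil := by
    rw [hhν, hbtil]
    push_cast
    exact sum_congr rfl fun k _ => by rw [add_comm]
  have hνderiv : HasDerivAt hνfun (-etil) se := by
    have hetilC : ∑ k, (b k : ℂ) ^ 2 / (se + ω k) ^ 2 = etil := by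
      rw [hetil]
      push_cast
      exact sum_congr rfl fun k _ => by rw [add_comm]
    rw [funext hhν, ← hetilC]
    exact hasDerivAt_sum_div_add univ (fun k => (b k : ℂ) ^ 2) (fun k => (ω k : ℂ)) hpoleC
  have hνkderiv : HasDerivAt hνkfun (-etil) se := by
    rw [funext hhνk]
    exact hasDerivAt_sq_div_mul_add hdenom hbtilC
  have hval : hνkfun se = hνfun se := by
    rw [hhνk, hdenom, hνval]
    field_simp
  have heνkderiv : HasDerivAt eνk 0 se := by
    rw [funext heνk]
    exact hasDerivAt_sub_div_of_eq hνkderiv hνderiv hval (hνval ▸ hbtilC)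
  refine ⟨hval, hνkderiv.deriv.trans hνderiv.deriv.symm, ?_, heνkderiv.deriv⟩
  rw [heνk, hval, sub_self, zero_div]
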